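/- For |z| < 1, (1/pi^2) * double integral over [0,pi]^2 of dk_1 dk_2 / (1 - (z/2)(cos k_1 + cos k_2)) = (1/pi^2) * double integral over [0,pi]^2 of dk_1 dk_2 / (1 - z cos(k_1) cos(k_2)); i.e., the LGFs of the square lattice and the diagonal (2D fcc) lattice coincide. -/

import Mathlib

open scoped Real
open Finset intervalIntegral Real

/-!
Expanding both integrands in geometric series in `z` (dominated convergence applies because both
structure functions are bounded by `1`), the theorem reduces to the equality of the moments
`∫∫ ((cos k₁ + cos k₂) / 2) ^ n` and `∫∫ (cos k₁ cos k₂) ^ n = W n ^ 2`, where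
`W n = ∫₀^π cos ^ n` (`cosPowIntegral n`). The binomial theorem turns the first into
`2⁻ⁿ ∑ⱼ C(n, j) W j W (n - j)`. Since `W` vanishes at odd arguments and
`W (2m) = π C(2m, m) / 4 ^ m`, equality of the two moments is Vandermonde's identity
`∑ᵢ C(m, i) ^ 2 = C(2m, m)`.
-/

section GeometricSeries

variable {a b c d z : ℝ}

theorem hasSum_intervalIntegral_geometric {g : ℝ → ℝ} (hg : Continuous g)
    (hg1 : ∀ x, |g x| ≤ 1) (hz : |z| < 1) :
    HasSum (fun n : ℕ => ∫ x in a..b, (z * g x) ^ n) (∫ x in a..b, 1 / (1 - z * g x)) := by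
  have hzg : ∀ x, ‖z * g x‖ ≤ |z| := fun x => by
    simpa [abs_mul] using mul_le_mul_of_nonneg_left (hg1 x) (abs_nonneg z)
  refine hasSum_integral_of_dominated_convergence (fun n _ => |z| ^ n)
    (fun n => ((continuous_const.mul hg).pow n).aestronglyMeasurable)
    (fun n => .of_forall fun x _ => ?_)
    (.of_forall fun _ _ => summable_geometric_of_lt_one (abs_nonneg z) hz)
    intervalIntegrable_const (.of_forall fun x _ => ?_)
  · simpa [norm_pow] using pow_le_pow_left₀ (norm_nonneg _) (hzg x) n
  · simpa [one_div] using hasSum_geometric_of_norm_lt_one ((hzg x).trans_lt hz)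

theorem hasSum_integral_integral_geometric {g : ℝ → ℝ → ℝ} (hg : Continuous g.uncurry)
    (hg1 : ∀ x y, |g x y| ≤ 1) (hz : |z| < 1) :
    HasSum (fun n : ℕ => z ^ n * ∫ x in a..b, ∫ y in c..d, g x y ^ n)
      (∫ x in a..b, ∫ y in c..d, 1 / (1 - z * g x y)) := by
  have hcoeff (n : ℕ) :
      z ^ n * ∫ x in a..b, ∫ y in c..d, g x y ^ n =
        ∫ x in a..b, ∫ y in c..d, (z * g x y) ^ n := by
    simp only [mul_pow, integral_const_mul]
  simp only [hcoeff]
  have hcont (n : ℕ) : Continuous fun x => ∫ y in c..d, (z * g x y) ^ n :=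
    continuous_parametric_intervalIntegral_of_continuous' ((continuous_const.mul hg).pow n) c d
  refine hasSum_integral_of_dominated_convergence (fun n _ => |z| ^ n * |d - c|)
    (fun n => (hcont n).aestronglyMeasurable) (fun n => .of_forall fun x _ => ?_)
    (.of_forall fun _ _ =>
      (summable_geometric_of_lt_one (abs_nonneg z) hz).mul_right _)
    intervalIntegrable_const (.of_forall fun x _ =>
      hasSum_intervalIntegral_geometric (by fun_prop) (hg1 x) hz)
  refine norm_integral_le_of_norm_le_const fun y _ => ?_
  simpa [norm_pow, abs_mul] using
    pow_le_pow_left₀ (by positivity) (mul_le_mul_of_nonneg_left (hg1 x y) (abs_nonneg z)) n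

end GeometricSeries

noncomputable def cosPowIntegral (n : ℕ) : ℝ := ∫ x in 0..π, cos x ^ n

theorem cosPowIntegral_of_odd {n : ℕ} (hn : Odd n) : cosPowIntegral n = 0 := by
  have h := integral_comp_sub_left (fun x => cos x ^ n) π (a := 0) (b := π)
  simp only [cos_pi_sub, hn.neg_pow, integral_neg, sub_zero, sub_self] at h
  exact neg_eq_self.mp h

theorem cosPowIntegral_two_mul (m : ℕ) :
    cosPowIntegral (2 * m) = π * m.centralBinom / 4 ^ m := by
  induction m with
  | zero => simp [cosPowIntegral]
  | succ m ih =>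
    have hrec := integral_cos_pow (a := 0) (b := π) (n := 2 * m)
    have hcb : ((m : ℝ) + 1) * (m + 1).centralBinom = 2 * (2 * m + 1) * m.centralBinom := by
      exact_mod_cast Nat.succ_mul_centralBinom_succ m
    rw [cosPowIntegral, mul_add_one, hrec, ← cosPowIntegral, ih]
    simp only [sin_zero, sin_pi]
    push_cast
    field_simp
    linear_combination (-2 * 4 ^ m * π) * hcb

theorem choose_two_mul_mul_centralBinom_mul_centralBinom {i m : ℕ} (h : i ≤ m) :
    (2 * m).choose (2 * i) * i.centralBinom * (m - i).centralBinom =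
      m.centralBinom * m.choose i ^ 2 := by
  obtain ⟨k, rfl⟩ := Nat.exists_eq_add_of_le h
  rw [Nat.add_sub_cancel_left]
  simp only [Nat.centralBinom_eq_two_mul_choose, two_mul]
  qify
  simp only [Nat.cast_add_choose]
  rw [show i + k + (i + k) = i + i + (k + k) by ring]
  field_simp
  norm_cast
  rw [Nat.choose_symm_add]
  exact Nat.add_choose_mul_factorial_mul_factorial _ _

theorem sum_range_two_mul_add_one_of_odd_eq_zero {M : Type*} [AddCommMonoid M] {f : ℕ → M}
    (hf : ∀ i, f (2 * i + 1) = 0) (m : ℕ) :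
    ∑ j ∈ range (2 * m + 1), f j = ∑ i ∈ range (m + 1), f (2 * i) := by
  induction m with
  | zero => simp
  | succ m ih =>
    rw [sum_range_succ _ (m + 1), ← ih, mul_add_one, sum_range_succ, sum_range_succ, hf, add_zero]

theorem sum_choose_mul_cosPowIntegral (n : ℕ) :
    ∑ j ∈ range (n + 1), cosPowIntegral j * cosPowIntegral (n - j) * n.choose j =
      2 ^ n * cosPowIntegral n ^ 2 := by
  obtain ⟨m, rfl | rfl⟩ := Nat.even_or_odd' n
  · rw [sum_range_two_mul_add_one_of_odd_eq_zero (fun i => by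
      rw [cosPowIntegral_of_odd (odd_two_mul_add_one i), zero_mul, zero_mul])]
    have hterm : ∀ i ∈ range (m + 1),
        cosPowIntegral (2 * i) * cosPowIntegral (2 * m - 2 * i) * (2 * m).choose (2 * i) =
          π ^ 2 / 4 ^ m * (m.centralBinom * m.choose i ^ 2) := fun i hi => by
      have him : i ≤ m := mem_range_succ_iff.mp hi
      have hchoose : ((2 * m).choose (2 * i) * i.centralBinom * (m - i).centralBinom : ℝ) =
          m.centralBinom * m.choose i ^ 2 := by
        exact_mod_cast choose_two_mul_mul_centralBinom_mul_centralBinom him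
      have hpow : (4 : ℝ) ^ m = 4 ^ i * 4 ^ (m - i) := by
        rw [← pow_add, Nat.add_sub_cancel' him]
      rw [← Nat.mul_sub, cosPowIntegral_two_mul, cosPowIntegral_two_mul, ← hchoose, hpow]
      field_simp
    have hvand : (∑ i ∈ range (m + 1), (m.choose i : ℝ) ^ 2) = m.centralBinom := by
      exact_mod_cast Nat.sum_range_choose_sq m
    rw [sum_congr rfl hterm, ← mul_sum, ← mul_sum, hvand, cosPowIntegral_two_mul, pow_mul]
    field_simp
    ring
  · rw [cosPowIntegral_of_odd (odd_two_mul_add_one m)]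
    refine (sum_eq_zero fun j hj => ?_).trans (by ring)
    obtain heven | hodd := Nat.even_or_odd j
    · rw [cosPowIntegral_of_odd
        (Nat.Odd.sub_even (mem_range_succ_iff.mp hj) (odd_two_mul_add_one m) heven), mul_zero,
        zero_mul]
    · rw [cosPowIntegral_of_odd hodd, zero_mul, zero_mul]

theorem integral_integral_cos_mul_cos_pow (n : ℕ) :
    ∫ x in 0..π, ∫ y in 0..π, (cos x * cos y) ^ n = cosPowIntegral n ^ 2 := by
  simp only [mul_pow, integral_const_mul, integral_mul_const, cosPowIntegral, sq]

theorem integral_integral_cos_add_cos_pow (n : ℕ) :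
    ∫ x in 0..π, ∫ y in 0..π, (cos x + cos y) ^ n =
      ∑ j ∈ range (n + 1), cosPowIntegral j * cosPowIntegral (n - j) * n.choose j := by
  have hinner (x : ℝ) : ∫ y in 0..π, (cos x + cos y) ^ n =
      ∑ j ∈ range (n + 1), cos x ^ j * cosPowIntegral (n - j) * n.choose j := by
    simp only [add_pow]
    rw [integral_finsetSum fun j _ => (by fun_prop : Continuous _).intervalIntegrable _ _]
    simp only [integral_const_mul, integral_mul_const, cosPowIntegral]
  simp only [hinner]
  rw [integral_finsetSum fun j _ => (by fun_prop : Continuous _).intervalIntegrable _ _]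
  simp only [integral_mul_const, cosPowIntegral]

theorem integral_integral_half_cos_add_cos_pow (n : ℕ) :
    ∫ x in 0..π, ∫ y in 0..π, ((cos x + cos y) / 2) ^ n =
      ∫ x in 0..π, ∫ y in 0..π, (cos x * cos y) ^ n := by
  simp only [div_pow, integral_div, integral_integral_cos_add_cos_pow,
    sum_choose_mul_cosPowIntegral, integral_integral_cos_mul_cos_pow]
  field_simp

/-- For `|z| < 1`, the lattice Green's functions of the square lattice (structure
function `(cos k₁ + cos k₂)/2`) and of the diagonal (2D fcc) lattice (structure
function `cos k₁ cos k₂`) coincide. -/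
theorem lgf_square_eq_lgf_fcc2 (z : ℝ) (hz : |z| < 1) :
    (1 / π ^ 2) * (∫ k₁ in (0:ℝ)..π, ∫ k₂ in (0:ℝ)..π,
        1 / (1 - (z / 2) * (Real.cos k₁ + Real.cos k₂))) =
    (1 / π ^ 2) * (∫ k₁ in (0:ℝ)..π, ∫ k₂ in (0:ℝ)..π,
        1 / (1 - z * Real.cos k₁ * Real.cos k₂)) := by
  have hsquare := hasSum_integral_integral_geometric (a := 0) (b := π) (c := 0) (d := π)
    (g := fun x y => (cos x + cos y) / 2) (by fun_prop)
    (fun x y => abs_le.2 ⟨by linarith [neg_one_le_cos x, neg_one_le_cos y],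
      by linarith [cos_le_one x, cos_le_one y]⟩) hz
  have hfcc := hasSum_integral_integral_geometric (a := 0) (b := π) (c := 0) (d := π)
    (g := fun x y => cos x * cos y) (by fun_prop)
    (fun x y => by
      simpa [abs_mul] using mul_le_one₀ (abs_cos_le_one x) (abs_nonneg _) (abs_cos_le_one y)) hz
  simp only [integral_integral_half_cos_add_cos_pow] at hsquare
  congr 1
  convert hsquare.unique hfcc using 5 <;> ring
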